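/- arXiv:2007.02553 — 3 statements merged into one kernel-verified Lean document; each statement's English description precedes it below -/
import Mathlib

section
/- Let (Ω, F, P) be a probability space and let E ⊆ L^0(F, P; ℝ^d) be a linear subspace that is closed with respect to convergence in probability and stable in the sense that f, g ∈ E and A ∈ F imply f·1_A + g·1_{A^c} ∈ E. Then there exists an F-measurable map 𝔓 from Ω into the set of orthogonal projections of ℝ^d such that for every f ∈ L^0(F, P; ℝ^d): f ∈ E if and only if 𝔓f = f P-almost surely. -/
/-!
Pick `g₀, …, g_{d-1} ∈ E`, pointwise orthogonal, where `gₖ` has maximal support up to null sets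
among the elements of `E` that are a.e. orthogonal to `g₀, …, g_{k-1}`. Such maximisers exist
because pasting joins countably many supports and closedness lets one pass to the limit. An
`h ∈ E` orthogonal to every `gᵢ` vanishes a.e.: where `h ≠ 0`, maximality forces every `gᵢ ≠ 0`,
which would give `d + 1` nonzero orthogonal vectors in `ℝᵈ`. So `𝔓(ω)`, the orthogonal
projection onto `span {gᵢ(ω)}`, works: `𝔓f = ∑ cᵢ gᵢ` with measurable coefficients lies in `E`,
and for `f ∈ E` the residual `f - 𝔓f ∈ E` is orthogonal to every `gᵢ`.
-/

open MeasureTheory Filter Set Function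
open scoped InnerProductSpace RealInnerProductSpace Topology

theorem Fin.pairwise_cons {α : Type*} {r : α → α → Prop} (hr : ∀ a b, r a b → r b a) {n : ℕ}
    {a : α} {v : Fin n → α} (ha : ∀ i, r a (v i)) (hv : Pairwise fun i j => r (v i) (v j)) :
    Pairwise fun i j =>
      r ((Fin.cons a v : Fin (n + 1) → α) i) ((Fin.cons a v : Fin (n + 1) → α) j) := by
  intro i j hij
  cases i using Fin.cases with
  | zero =>
    cases j using Fin.cases with
    | zero => exact absurd rfl hij
    | succ j => simpa using ha j
  | succ i =>
    cases j using Fin.cases with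
    | zero => simpa using hr _ _ (ha i)
    | succ j => simpa using hv (ne_of_apply_ne Fin.succ hij)

section InnerProductSpace

variable {𝕜 V ι : Type*} [RCLike 𝕜] [NormedAddCommGroup V] [InnerProductSpace 𝕜 V] [Fintype ι]

theorem eq_zero_of_inner_eq_zero_of_card_eq_finrank [FiniteDimensional 𝕜 V] {v : ι → V}
    (hcard : Fintype.card ι = Module.finrank 𝕜 V) (hv0 : ∀ i, v i ≠ 0)
    (hv : Pairwise fun i j => ⟪v i, v j⟫_𝕜 = 0) {x : V} (hx : ∀ i, ⟪x, v i⟫_𝕜 = 0) :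
    x = 0 := by
  have hspan : Submodule.span 𝕜 (range v) = ⊤ :=
    (linearIndependent_of_ne_zero_of_inner_eq_zero hv0 hv).span_eq_top_of_card_eq_finrank' hcard
  have hx_ortho : (𝕜 ∙ x) ⟂ Submodule.span 𝕜 (range v) :=
    Submodule.isOrtho_span.2 <| by rintro _ rfl _ ⟨i, rfl⟩; exact hx i
  rwa [hspan, Submodule.isOrtho_top_right, Submodule.span_singleton_eq_bot] at hx_ortho

theorem starProjection_span_range_apply {v : ι → V}
    [(Submodule.span 𝕜 (range v)).HasOrthogonalProjection]
    (hv : Pairwise fun i j => ⟪v i, v j⟫_𝕜 = 0) (x : V) :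
    (Submodule.span 𝕜 (range v)).starProjection x = ∑ i, (𝕜 ∙ v i).starProjection x := by
  refine Submodule.eq_starProjection_of_mem_of_inner_eq_zero (Submodule.sum_mem _ fun i _ =>
    Submodule.span_mono (singleton_subset_iff.2 (mem_range_self i))
      (Submodule.starProjection_apply_mem _ _)) fun w hw => ?_
  induction hw using Submodule.span_induction with
  | mem w hw =>
    obtain ⟨j, rfl⟩ := hw
    have h_other : ∀ i, i ≠ j → ⟪(𝕜 ∙ v i).starProjection x, v j⟫_𝕜 = 0 := fun i hij => by
      rw [Submodule.inner_starProjection_left_eq_right, Submodule.starProjection_singleton,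
        hv hij, zero_div, zero_smul, inner_zero_right]
    rw [inner_sub_left, sum_inner, Finset.sum_eq_single j (fun i _ => h_other i) (by simp),
      Submodule.inner_starProjection_left_eq_right,
      Submodule.starProjection_eq_self_iff.2 (Submodule.mem_span_singleton_self _), sub_self]
  | zero => exact inner_zero_right _
  | add _ _ _ _ h₁ h₂ => rw [inner_add_right, h₁, h₂, add_zero]
  | smul _ _ _ h => rw [inner_smul_right, h, mul_zero]

end InnerProductSpace

section FillZeros

variable {Ω V : Type*} [AddZeroClass V] {g f : Ω → V} {ω : Ω}

noncomputable def fillZeros (g f : Ω → V) : Ω → V :=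
  (support g).indicator g + (support g)ᶜ.indicator f

theorem fillZeros_of_ne_zero (h : g ω ≠ 0) : fillZeros g f ω = g ω := by
  simp [fillZeros, h]

theorem fillZeros_of_eq_zero (h : g ω = 0) : fillZeros g f ω = f ω := by
  simp [fillZeros, h]

theorem support_fillZeros : support (fillZeros g f) = support g ∪ support f := by
  ext ω
  by_cases h : g ω = 0 <;> simp [fillZeros_of_eq_zero, fillZeros_of_ne_zero, h]

noncomputable def fillZerosSeq (F : ℕ → Ω → V) : ℕ → Ω → V
  | 0 => F 0
  | n + 1 => fillZeros (fillZerosSeq F n) (F (n + 1))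

theorem support_subset_support_fillZerosSeq (F : ℕ → Ω → V) (n : ℕ) :
    support (F n) ⊆ support (fillZerosSeq F n) := by
  cases n with
  | zero => exact subset_rfl
  | succ n => rw [fillZerosSeq, support_fillZeros]; exact subset_union_right

theorem fillZerosSeq_eq_of_ne_zero {F : ℕ → Ω → V} {m n : ℕ} (hm : fillZerosSeq F m ω ≠ 0)
    (hmn : m ≤ n) : fillZerosSeq F n ω = fillZerosSeq F m ω := by
  induction n, hmn using Nat.le_induction with
  | base => rfl
  | succ n _ ih => rw [fillZerosSeq, fillZeros_of_ne_zero (ih ▸ hm), ih]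

theorem exists_tendsto_fillZerosSeq [TopologicalSpace V] (F : ℕ → Ω → V) (ω : Ω) :
    ∃ l, Tendsto (fun n => fillZerosSeq F n ω) atTop (𝓝 l) := by
  by_cases h : ∀ n, fillZerosSeq F n ω = 0
  · exact ⟨0, by simp only [h, tendsto_const_nhds]⟩
  · obtain ⟨m, hm⟩ := not_forall.1 h
    exact ⟨_, tendsto_atTop_of_eventually_const fun n => fillZerosSeq_eq_of_ne_zero hm⟩

end FillZeros

structure IsStableClosed {Ω V : Type*} [MeasurableSpace Ω] [NormedAddCommGroup V]
    [MeasurableSpace V] (P : Measure Ω) (E : Set (Ω → V)) : Prop where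
  measurable : ∀ f ∈ E, Measurable f
  zero_mem : (0 : Ω → V) ∈ E
  indicator_add_compl_mem : ∀ f ∈ E, ∀ g ∈ E, ∀ A : Set Ω, MeasurableSet A →
    A.indicator f + Aᶜ.indicator g ∈ E
  mem_of_tendstoInMeasure : ∀ (f : ℕ → Ω → V) (g : Ω → V), (∀ n, f n ∈ E) → Measurable g →
    TendstoInMeasure P f atTop g → g ∈ E

namespace IsStableClosed

section SupportMaximizer

variable {Ω V : Type*} [MeasurableSpace Ω] [NormedAddCommGroup V] [MeasurableSpace V]
  {P : Measure Ω} {E : Set (Ω → V)}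

theorem indicator_mem (hE : IsStableClosed P E) {f : Ω → V} (hf : f ∈ E) {A : Set Ω}
    (hA : MeasurableSet A) : A.indicator f ∈ E := by
  simpa using hE.indicator_add_compl_mem f hf 0 hE.zero_mem A hA

theorem mem_of_ae_eq (hE : IsStableClosed P E) {f g : Ω → V} (hf : f ∈ E) (hg : Measurable g)
    (hfg : f =ᵐ[P] g) : g ∈ E :=
  hE.mem_of_tendstoInMeasure (fun _ => f) g (fun _ => hf) hg <|
    (tendstoInMeasure_iff_dist.2 fun ε hε => by simp [hε.not_ge]).congr_right hfg

theorem fillZeros_mem [MeasurableSingletonClass V] (hE : IsStableClosed P E) {g f : Ω → V}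
    (hg : g ∈ E) (hf : f ∈ E) : fillZeros g f ∈ E :=
  hE.indicator_add_compl_mem g hg f hf _ (measurableSet_support (hE.measurable g hg))

variable [IsFiniteMeasure P] [BorelSpace V] [SecondCountableTopology V]

theorem exists_mem_support_subset (hE : IsStableClosed P E) {F : ℕ → Ω → V}
    (hF : ∀ n, F n ∈ E) : ∃ g ∈ E, ∀ n, support (F n) ⊆ support g := by
  have hF' : ∀ n, fillZerosSeq F n ∈ E := by
    intro n
    induction n with
    | zero => exact hF 0
    | succ n ih => exact hE.fillZeros_mem ih (hF (n + 1))
  have hF'_meas n := hE.measurable _ (hF' n)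
  choose g hg using exists_tendsto_fillZerosSeq F
  have hg_meas : Measurable g := measurable_of_tendsto_metrizable hF'_meas (tendsto_pi_nhds.2 hg)
  refine ⟨g, hE.mem_of_tendstoInMeasure _ g hF' hg_meas <| tendstoInMeasure_of_tendsto_ae
    (fun n => (hF'_meas n).aestronglyMeasurable) (ae_of_all _ hg), fun n => ?_⟩
  refine (support_subset_support_fillZerosSeq F n).trans fun ω hω => ?_
  rwa [mem_support, tendsto_nhds_unique (hg ω) (tendsto_atTop_of_eventually_const
    fun m => fillZerosSeq_eq_of_ne_zero hω)]

theorem exists_ae_support_subset (hE : IsStableClosed P E) :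
    ∃ g ∈ E, ∀ f ∈ E, support f ≤ᵐ[P] support g := by
  set S := (fun f => P (support f)) '' E
  obtain ⟨u, -, hu_lim, hu_mem⟩ := exists_seq_tendsto_sSup (S := S)
    ⟨_, mem_image_of_mem _ hE.zero_mem⟩ (OrderTop.bddAbove S)
  choose F hFE hFu using hu_mem
  obtain ⟨g, hgE, hFg⟩ := hE.exists_mem_support_subset hFE
  have hg_max : sSup S ≤ P (support g) :=
    le_of_tendsto' hu_lim fun n => hFu n ▸ measure_mono (hFg n)
  refine ⟨g, hgE, fun f hf => ?_⟩
  have h_union : P (support g ∪ support f) ≤ P (support g) := by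
    rw [← support_fillZeros]
    exact (le_sSup (mem_image_of_mem _ (hE.fillZeros_mem hgE hf))).trans hg_max
  have h_ae := ae_eq_of_subset_of_measure_ge subset_union_left h_union
    (measurableSet_support (hE.measurable g hgE)).nullMeasurableSet (measure_ne_top _ _)
  exact subset_union_right.eventuallyLE.trans h_ae.symm.le

end SupportMaximizer

section Orthogonal

variable {Ω V ι : Type*} [MeasurableSpace Ω] [NormedAddCommGroup V] [InnerProductSpace ℝ V]
  [MeasurableSpace V] {P : Measure Ω} {E : Set (Ω → V)}

theorem sep_ae_orthogonal (hE : IsStableClosed P E) (v : ι → Ω → V) :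
    IsStableClosed P {f ∈ E | ∀ i, ∀ᵐ ω ∂P, ⟪f ω, v i ω⟫ = 0} where
  measurable f hf := hE.measurable f hf.1
  zero_mem := ⟨hE.zero_mem, fun i => ae_of_all _ fun ω => inner_zero_left _⟩
  indicator_add_compl_mem f hf g hg A hA := by
    refine ⟨hE.indicator_add_compl_mem f hf.1 g hg.1 A hA, fun i => ?_⟩
    filter_upwards [hf.2 i, hg.2 i] with ω hfω hgω
    by_cases hω : ω ∈ A <;> simp [hω, hfω, hgω]
  mem_of_tendstoInMeasure f g hf hg hfg := by
    refine ⟨hE.mem_of_tendstoInMeasure f g (fun n => (hf n).1) hg hfg, fun i => ?_⟩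
    obtain ⟨ns, -, hns⟩ := hfg.exists_seq_tendsto_ae
    filter_upwards [hns, ae_all_iff.2 fun n => (hf (ns n)).2 i] with ω hω hω0
    exact tendsto_nhds_unique (hω.inner tendsto_const_nhds)
      (by simp only [hω0, tendsto_const_nhds])

variable [IsFiniteMeasure P] [BorelSpace V] [SecondCountableTopology V]

theorem exists_orthogonal_ae_support_subset [Countable ι] (hE : IsStableClosed P E)
    {v : ι → Ω → V} (hv : ∀ i, Measurable (v i)) :
    ∃ m ∈ E, (∀ ω i, ⟪m ω, v i ω⟫ = 0) ∧
      ∀ h ∈ E, (∀ i, ∀ᵐ ω ∂P, ⟪h ω, v i ω⟫ = 0) → support h ≤ᵐ[P] support m := by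
  obtain ⟨m, ⟨hmE, hm_orth⟩, hm_max⟩ := (hE.sep_ae_orthogonal v).exists_ae_support_subset
  -- `m` is orthogonal to the `v i` only a.e.; cut it down to where it is orthogonal.
  set A := {ω | ∀ i, ⟪m ω, v i ω⟫ = 0}
  have hA : MeasurableSet A := by
    simp only [A, ofPred_forall]
    exact MeasurableSet.iInter fun i =>
      measurableSet_eq_fun ((hE.measurable m hmE).inner (hv i)) measurable_const
  have hAm : A.indicator m =ᵐ[P] m := by
    filter_upwards [ae_all_iff.2 hm_orth] with ω hω
    exact indicator_of_mem (show ω ∈ A from hω) m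
  refine ⟨A.indicator m, hE.indicator_mem hmE hA, fun ω i => ?_, fun h hh hh_orth => ?_⟩
  · by_cases hω : ω ∈ A
    · simpa [hω] using hω i
    · simp [hω]
  · refine (hm_max h ⟨hh, hh_orth⟩).trans ?_
    filter_upwards [hAm] with ω hω hmω
    show ω ∈ support _
    rwa [mem_support, hω]

theorem exists_orthogonal_family (hE : IsStableClosed P E) (k : ℕ) :
    ∃ g : Fin k → Ω → V, (∀ i, g i ∈ E) ∧ (∀ ω, Pairwise fun i j => ⟪g i ω, g j ω⟫ = 0) ∧
      ∀ h ∈ E, (∀ i, ∀ᵐ ω ∂P, ⟪h ω, g i ω⟫ = 0) → ∀ᵐ ω ∂P, h ω ≠ 0 → ∀ i, g i ω ≠ 0 := by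
  induction k with
  | zero =>
    exact ⟨Fin.elim0, fun i => i.elim0, fun _ i => i.elim0,
      fun _ _ _ => ae_of_all _ fun _ _ i => i.elim0⟩
  | succ k ih =>
    obtain ⟨g, hgE, hg_orth, hg_total⟩ := ih
    obtain ⟨m, hmE, hm_orth, hm_max⟩ :=
      hE.exists_orthogonal_ae_support_subset fun i => hE.measurable _ (hgE i)
    refine ⟨Fin.cons m g, Fin.cases hmE hgE, fun ω => ?_, fun h hh hh_orth => ?_⟩
    · exact Fin.pairwise_cons (r := fun a b : Ω → V => ⟪a ω, b ω⟫ = 0)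
        (fun _ _ h => by rwa [real_inner_comm]) (hm_orth ω) (hg_orth ω)
    · filter_upwards [hg_total h hh fun i => hh_orth i.succ,
        hm_max h hh fun i => hh_orth i.succ] with ω hg_ne hm_ne hω
      exact Fin.cases (hm_ne hω) (hg_ne hω)

theorem exists_total_orthogonal_family [FiniteDimensional ℝ V] (hE : IsStableClosed P E) :
    ∃ g : Fin (Module.finrank ℝ V) → Ω → V, (∀ i, g i ∈ E) ∧
      (∀ ω, Pairwise fun i j => ⟪g i ω, g j ω⟫ = 0) ∧
      ∀ h ∈ E, (∀ i, ∀ᵐ ω ∂P, ⟪h ω, g i ω⟫ = 0) → h =ᵐ[P] 0 := by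
  obtain ⟨g, hgE, hg_orth, hg_total⟩ := hE.exists_orthogonal_family (Module.finrank ℝ V)
  refine ⟨g, hgE, hg_orth, fun h hh hh_orth => ?_⟩
  filter_upwards [hg_total h hh hh_orth, ae_all_iff.2 hh_orth] with ω hg_ne hω_orth
  by_contra hne
  exact hne (eq_zero_of_inner_eq_zero_of_card_eq_finrank (Fintype.card_fin _) (hg_ne hne)
    (hg_orth ω) hω_orth)

end Orthogonal

section ModuleStructure

variable {Ω V ι : Type*} [MeasurableSpace Ω] [NormedAddCommGroup V] [NormedSpace ℝ V]
  [MeasurableSpace V] [BorelSpace V] [SecondCountableTopology V] {P : Measure Ω}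
  [IsFiniteMeasure P] {E : Submodule ℝ (Ω → V)}

theorem smul_mem (hE : IsStableClosed P (E : Set (Ω → V))) {c : Ω → ℝ} (hc : Measurable c)
    {f : Ω → V} (hf : f ∈ E) : (fun ω => c ω • f ω) ∈ E := by
  have h_simple (s : SimpleFunc Ω ℝ) : (fun ω => s ω • f ω) ∈ E := by
    induction s using SimpleFunc.induction with
    | @const a A hA =>
      have h_eq : (fun ω => (SimpleFunc.piecewise A hA (.const Ω a) (.const Ω 0)) ω • f ω) =
          A.indicator (a • f) := by
        ext ω
        by_cases hω : ω ∈ A <;> simp [hω]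
      exact h_eq ▸ hE.indicator_mem (E.smul_mem a hf) hA
    | add _ hp hq =>
      simp only [SimpleFunc.coe_add, Pi.add_apply, add_smul]
      exact E.add_mem hp hq
  let s := SimpleFunc.approxOn c hc univ 0 (mem_univ 0)
  have hf_meas := hE.measurable f hf
  refine hE.mem_of_tendstoInMeasure _ _ (fun n => h_simple (s n)) (hc.smul hf_meas) <|
    tendstoInMeasure_of_tendsto_ae (fun n => ((s n).measurable.smul hf_meas).aestronglyMeasurable)
      (ae_of_all _ fun ω => ?_)
  exact (SimpleFunc.tendsto_approxOn hc (mem_univ 0) (by simp)).smul_const (f ω)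

theorem sum_smul_mem [Fintype ι] (hE : IsStableClosed P (E : Set (Ω → V)))
    {c : ι → Ω → ℝ} (hc : ∀ i, Measurable (c i)) {g : ι → Ω → V} (hg : ∀ i, g i ∈ E) :
    (fun ω => ∑ i, c i ω • g i ω) ∈ E := by
  convert E.sum_mem (t := Finset.univ) fun i _ => hE.smul_mem (hc i) (hg i) using 1
  ext ω
  simp [Finset.sum_apply]

end ModuleStructure

end IsStableClosed

section SpanProjection

variable {Ω V ι : Type*} [NormedAddCommGroup V] [InnerProductSpace ℝ V] [FiniteDimensional ℝ V]
  {g : ι → Ω → V}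

noncomputable def spanProjection (g : ι → Ω → V) (ω : Ω) : V →L[ℝ] V :=
  (Submodule.span ℝ (range fun i => g i ω)).starProjection

theorem spanProjection_apply [Fintype ι] {ω : Ω} (hg : Pairwise fun i j => ⟪g i ω, g j ω⟫ = 0)
    (x : V) : spanProjection g ω x = ∑ i, (⟪g i ω, x⟫ / ‖g i ω‖ ^ 2) • g i ω := by
  simp [spanProjection, starProjection_span_range_apply hg, Submodule.starProjection_singleton]

theorem inner_sub_spanProjection_apply (ω : Ω) (x : V) (i : ι) :
    ⟪x - spanProjection g ω x, g i ω⟫ = 0 :=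
  Submodule.inner_left_of_mem_orthogonal (Submodule.subset_span (mem_range_self i))
    (Submodule.sub_starProjection_mem_orthogonal x)

variable [Fintype ι] [MeasurableSpace Ω] [MeasurableSpace V] [BorelSpace V]

theorem measurable_spanProjection_apply (hg_meas : ∀ i, Measurable (g i))
    (hg_orth : ∀ ω, Pairwise fun i j => ⟪g i ω, g j ω⟫ = 0) {f : Ω → V} (hf : Measurable f) :
    Measurable fun ω => spanProjection g ω (f ω) := by
  simp only [spanProjection_apply (hg_orth _)]
  fun_prop

variable {P : Measure Ω} [IsFiniteMeasure P] {E : Submodule ℝ (Ω → V)}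

theorem IsStableClosed.spanProjection_apply_mem (hE : IsStableClosed P (E : Set (Ω → V)))
    (hgE : ∀ i, g i ∈ E) (hg_orth : ∀ ω, Pairwise fun i j => ⟪g i ω, g j ω⟫ = 0)
    {f : Ω → V} (hf : Measurable f) : (fun ω => spanProjection g ω (f ω)) ∈ E := by
  simp only [spanProjection_apply (hg_orth _)]
  have hg_meas i := hE.measurable _ (hgE i)
  exact hE.sum_smul_mem (fun i => by fun_prop) hgE

theorem IsStableClosed.mem_iff_ae_spanProjection_apply_eq
    (hE : IsStableClosed P (E : Set (Ω → V))) (hgE : ∀ i, g i ∈ E)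
    (hg_orth : ∀ ω, Pairwise fun i j => ⟪g i ω, g j ω⟫ = 0)
    (hg_total : ∀ h ∈ E, (∀ i, ∀ᵐ ω ∂P, ⟪h ω, g i ω⟫ = 0) → h =ᵐ[P] 0)
    {f : Ω → V} (hf : Measurable f) : f ∈ E ↔ ∀ᵐ ω ∂P, spanProjection g ω (f ω) = f ω := by
  have hS := hE.spanProjection_apply_mem hgE hg_orth hf
  refine ⟨fun hfE => ?_, hE.mem_of_ae_eq hS hf⟩
  have h_residual := hg_total _ (E.sub_mem hfE hS) fun i =>
    ae_of_all _ fun ω => inner_sub_spanProjection_apply ω (f ω) i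
  filter_upwards [h_residual] with ω hω
  exact (sub_eq_zero.1 hω).symm

end SpanProjection

theorem exists_measurable_projection_of_stable_subspace_general
    {Ω : Type*} [MeasurableSpace Ω] (P : Measure Ω) [IsProbabilityMeasure P]
    (d : ℕ)
    (E : Set (Ω → EuclideanSpace ℝ (Fin d)))
    (hE_meas : ∀ f ∈ E, Measurable f)
    (hE_zero : (fun _ => (0 : EuclideanSpace ℝ (Fin d))) ∈ E)
    (hE_add : ∀ f ∈ E, ∀ g ∈ E, f + g ∈ E)
    (hE_smul : ∀ c : ℝ, ∀ f ∈ E, c • f ∈ E)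
    (hE_closed : ∀ (f : ℕ → Ω → EuclideanSpace ℝ (Fin d))
      (g : Ω → EuclideanSpace ℝ (Fin d)), (∀ n, f n ∈ E) → Measurable g →
      TendstoInMeasure P f atTop g → g ∈ E)
    (hE_stable : ∀ f ∈ E, ∀ g ∈ E, ∀ A : Set Ω, MeasurableSet A →
      A.indicator f + Aᶜ.indicator g ∈ E) :
    ∃ 𝔓 : Ω → EuclideanSpace ℝ (Fin d) →L[ℝ] EuclideanSpace ℝ (Fin d),
      (∀ x, Measurable fun ω => 𝔓 ω x) ∧
      (∀ ω, (𝔓 ω).comp (𝔓 ω) = 𝔓 ω) ∧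
      (∀ ω x y, ⟪𝔓 ω x, y⟫ = ⟪x, 𝔓 ω y⟫) ∧
      (∀ f : Ω → EuclideanSpace ℝ (Fin d), Measurable f →
        (f ∈ E ↔ ∀ᵐ ω ∂P, 𝔓 ω (f ω) = f ω)) := by
  obtain ⟨M, rfl⟩ : ∃ M : Submodule ℝ (Ω → EuclideanSpace ℝ (Fin d)), (M : Set _) = E :=
    ⟨{ carrier := E
       add_mem' := fun {f g} hf hg => hE_add f hf g hg
       zero_mem' := hE_zero
       smul_mem' := hE_smul }, rfl⟩
  have hM : IsStableClosed P (M : Set (Ω → EuclideanSpace ℝ (Fin d))) :=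
    ⟨hE_meas, hE_zero, hE_stable, hE_closed⟩
  obtain ⟨g, hgM, hg_orth, hg_total⟩ := hM.exists_total_orthogonal_family
  exact ⟨spanProjection g,
    fun x => measurable_spanProjection_apply (fun i => hE_meas _ (hgM i)) hg_orth measurable_const,
    fun ω => (Submodule.isIdempotentElem_starProjection _).eq,
    fun ω => Submodule.inner_starProjection_left_eq_right _,
    fun f hf => hM.mem_iff_ae_spanProjection_apply_eq hgM hg_orth hg_total hf⟩

/-- **Measurable range projection (Lemma 6.2.1 of Delbaen–Schachermayer).**
Let `E ⊆ L⁰(F, P; ℝᵈ)` be a linear subspace, closed under convergence in probability and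
stable under pasting along measurable sets.  Then there exists an `F`-measurable map `𝔓`
from `Ω` into the orthogonal projections of `ℝᵈ` such that a measurable `f` belongs to `E`
if and only if `𝔓 f = f` almost surely. -/
theorem exists_measurable_projection_of_stable_subspace
    {Ω : Type*} [MeasurableSpace Ω] (P : Measure Ω) [IsProbabilityMeasure P]
    (d : ℕ)
    (E : Set (Ω → EuclideanSpace ℝ (Fin d)))
    (hE_meas : ∀ f ∈ E, Measurable f)
    (hE_ae : ∀ f ∈ E, ∀ g : Ω → EuclideanSpace ℝ (Fin d), Measurable g → f =ᵐ[P] g → g ∈ E)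
    (hE_zero : (fun _ => (0 : EuclideanSpace ℝ (Fin d))) ∈ E)
    (hE_add : ∀ f ∈ E, ∀ g ∈ E, f + g ∈ E)
    (hE_smul : ∀ c : ℝ, ∀ f ∈ E, c • f ∈ E)
    (hE_closed : ∀ (f : ℕ → Ω → EuclideanSpace ℝ (Fin d))
      (g : Ω → EuclideanSpace ℝ (Fin d)), (∀ n, f n ∈ E) → Measurable g →
      TendstoInMeasure P f atTop g → g ∈ E)
    (hE_stable : ∀ f ∈ E, ∀ g ∈ E, ∀ A : Set Ω, MeasurableSet A →
      A.indicator f + Aᶜ.indicator g ∈ E) :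
    ∃ 𝔓 : Ω → EuclideanSpace ℝ (Fin d) →L[ℝ] EuclideanSpace ℝ (Fin d),
      (∀ x, Measurable fun ω => 𝔓 ω x) ∧
      (∀ ω, (𝔓 ω).comp (𝔓 ω) = 𝔓 ω) ∧
      (∀ ω x y, ⟪𝔓 ω x, y⟫ = ⟪x, 𝔓 ω y⟫) ∧
      (∀ f : Ω → EuclideanSpace ℝ (Fin d), Measurable f →
        (f ∈ E ↔ ∀ᵐ ω ∂P, 𝔓 ω (f ω) = f ω)) :=
  exists_measurable_projection_of_stable_subspace_general P d E hE_meas hE_zero hE_add hE_smul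
    hE_closed hE_stable
end

section
/- Fix 1 ≤ t ≤ T, let Γ be a dense subset of Θ, and let (H_n)_{n∈ℕ} be a sequence of F_{t−1}-measurable ℝ^d-valued random variables in canonical form. Then: (i) (H_n)_{n∈ℕ} is a.s. bounded if and only if for every θ ∈ Γ the sequence (⟨H_n, ΔS^θ_t⟩)_{n∈ℕ} is a.s. bounded; (i') if in addition NRA holds, then (H_n)_{n∈ℕ} is a.s. bounded if and only if for every θ ∈ Γ the sequence of negative parts ((⟨H_n, ΔS^θ_t⟩)^−)_{n∈ℕ} is a.s. bounded. -/
open MeasureTheory Filter Set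
open scoped RealInnerProductSpace Topology

/-!
Let `A` be the event on which `(H_n)` is unbounded. Normalising a random subsequence along which
`‖H_n‖ → ∞` and extracting a measurable convergent subsequence (Kabanov–Stricker) gives an
`F_{t-1}`-measurable `h`, a unit vector in the asymptotic cone of `(H_n(ω))` on `A` and `0` off `A`.
A two-sided (resp. lower) bound on `⟨H_n, ΔS^θ_t⟩` forces `⟨h, ΔS^θ_t⟩ = 0` (resp. `≥ 0`) for
`θ ∈ Γ`, hence for all `θ ∈ Θ` by density and the continuity of `θ ↦ S^θ`; under NRA the one-period
strategy `h` turns `≥ 0` into `= 0`. Thus `𝔓h = h`; but the canonical form `𝔓H_n = 0` passes to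
the asymptotic cone, so `𝔓h = 0`, whence `h = 0` and `P(A) = 0`.
-/

/-- The cumulative gain `(H · S^θ)_T = ∑_{t=1}^T ⟨H_t, ΔS^θ_t⟩` of a strategy `H`
against the price process `S^θ`. -/
noncomputable def gain {Ω X : Type*} (d T : ℕ)
    (S : X → ℕ → Ω → EuclideanSpace ℝ (Fin d))
    (H : ℕ → Ω → EuclideanSpace ℝ (Fin d)) (θ : X) (ω : Ω) : ℝ :=
  ∑ t ∈ Finset.Icc 1 T, ⟪H t ω, S θ t ω - S θ (t - 1) ω⟫

/-- A (predictable) trading strategy: `H_t` is `F_{t-1}`-measurable for `1 ≤ t ≤ T`. -/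
def IsStrategy {Ω : Type*} (𝓕 : ℕ → MeasurableSpace Ω) (d T : ℕ)
    (H : ℕ → Ω → EuclideanSpace ℝ (Fin d)) : Prop :=
  ∀ t, 1 ≤ t → t ≤ T → StronglyMeasurable[𝓕 (t - 1)] (H t)

/-- No Robust Arbitrage: any strategy whose terminal gain is a.s. nonnegative in every
model `θ ∈ Θ` has a.s. zero terminal gain in every model `θ ∈ Θ`. -/
def NRA {Ω X : Type*} [MeasurableSpace Ω] (P : Measure Ω)
    (𝓕 : ℕ → MeasurableSpace Ω) (d T : ℕ) (Θ : Set X)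
    (S : X → ℕ → Ω → EuclideanSpace ℝ (Fin d)) : Prop :=
  ∀ H : ℕ → Ω → EuclideanSpace ℝ (Fin d), IsStrategy 𝓕 d T H →
    (∀ θ ∈ Θ, ∀ᵐ ω ∂P, 0 ≤ gain d T S H θ ω) →
    (∀ θ ∈ Θ, ∀ᵐ ω ∂P, gain d T S H θ ω = 0)

lemma frequently_le_of_not_bddAbove {β : Type*} [LinearOrder β] {u : ℕ → β}
    (hu : ¬BddAbove (range u)) (c : β) : ∃ᶠ n in atTop, c ≤ u n := by
  by_contra h
  simp only [not_frequently, not_le] at h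
  exact hu (isBoundedUnder_of_eventually_le (h.mono fun n hn => hn.le)).bddAbove_range

section MeasurableSubseq

variable {Ω : Type*} {m : MeasurableSpace Ω}

lemma measurable_apply_index {β : Type*} [MeasurableSpace β] {f : ℕ → Ω → β}
    (hf : ∀ n, Measurable (f n)) {g : Ω → ℕ} (hg : Measurable g) :
    Measurable fun ω => f (g ω) ω :=
  (measurable_from_prod_countable_left (f := fun p : Ω × ℕ => f p.2 p.1) hf).comp
    (measurable_id.prodMk hg)

variable (m) in
def IsMeasurableSubseq (τ : Ω → ℕ → ℕ) : Prop :=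
  (∀ ω, StrictMono (τ ω)) ∧ ∀ k, Measurable[m] fun ω => τ ω k

lemma IsMeasurableSubseq.comp {σ τ : Ω → ℕ → ℕ} (hσ : IsMeasurableSubseq m σ)
    (hτ : IsMeasurableSubseq m τ) : IsMeasurableSubseq m fun ω k => σ ω (τ ω k) :=
  ⟨fun ω => (hσ.1 ω).comp (hτ.1 ω),
    fun k => measurable_apply_index (f := fun n ω => σ ω n) hσ.2 (hτ.2 k)⟩

lemma exists_isMeasurableSubseq_forall {p : ℕ → Ω → ℕ → Prop}
    (hp : ∀ k ω, ∃ᶠ n in atTop, p k ω n) (hmeas : ∀ k n, MeasurableSet {ω | p k ω n}) :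
    ∃ τ, IsMeasurableSubseq m τ ∧ ∀ ω k, p k ω (τ ω k) := by
  classical
  have hex : ∀ k ω N, ∃ n, N ≤ n ∧ p k ω n := fun k ω => frequently_atTop.1 (hp k ω)
  -- `τ ω (k + 1)` is the least `n > τ ω k` with `p (k + 1) ω n`
  let τ : Ω → ℕ → ℕ := fun ω k =>
    Nat.rec (Nat.find (hex 0 ω 0)) (fun k n => Nat.find (hex (k + 1) ω (n + 1))) k
  have hτ_lt : ∀ ω k, τ ω k < τ ω (k + 1) := fun ω k =>
    (Nat.find_spec (hex (k + 1) ω (τ ω k + 1))).1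
  have hτ_mem : ∀ ω k, p k ω (τ ω k) := fun ω k => by
    cases k with
    | zero => exact (Nat.find_spec (hex 0 ω 0)).2
    | succ k => exact (Nat.find_spec (hex (k + 1) ω (τ ω k + 1))).2
  refine ⟨τ, ⟨fun ω => strictMono_nat_of_lt_succ (hτ_lt ω), fun k => ?_⟩, hτ_mem⟩
  induction k with
  | zero => exact measurable_find _ fun n => by simpa using hmeas 0 n
  | succ k ih =>
    exact measurable_find (fun ω => hex (k + 1) ω (τ ω k + 1)) fun n =>
      (ih (MeasurableSet.of_discrete (s := {j | j + 1 ≤ n}))).inter (hmeas (k + 1) n)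

lemma exists_isMeasurableSubseq_tendsto_limsup {x : ℕ → Ω → ℝ} (hx : ∀ n, Measurable (x n))
    (hb : ∀ ω, ∃ C, ∀ n, |x n ω| ≤ C) :
    ∃ τ, IsMeasurableSubseq m τ ∧
      ∀ ω, Tendsto (fun k => x (τ ω k) ω) atTop (𝓝 (limsup (fun n => x n ω) atTop)) := by
  set c : Ω → ℝ := fun ω => limsup (fun n => x n ω) atTop
  have hc_cluster : ∀ ω, MapClusterPt (c ω) atTop fun n => x n ω := fun ω => by
    obtain ⟨C, hC⟩ := hb ω
    exact MapClusterPt.limsup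
      (isBoundedUnder_of ⟨-C, fun n => (abs_le.1 (hC n)).1⟩).isCoboundedUnder_flip
      (isBoundedUnder_of ⟨C, fun n => (abs_le.1 (hC n)).2⟩)
  obtain ⟨τ, hτ, hτ_close⟩ := exists_isMeasurableSubseq_forall (m := m)
    (p := fun k ω n => dist (x n ω) (c ω) < 1 / ((k : ℝ) + 1))
    (fun k ω => (hc_cluster ω).frequently (Metric.ball_mem_nhds _ Nat.one_div_pos_of_nat))
    (fun k n => measurableSet_lt ((hx n).dist (Measurable.limsup hx)) measurable_const)
  refine ⟨τ, hτ, fun ω => tendsto_iff_dist_tendsto_zero.2 ?_⟩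
  exact squeeze_zero (fun _ => dist_nonneg) (fun k => (hτ_close ω k).le)
    tendsto_one_div_add_atTop_nhds_zero_nat

lemma exists_isMeasurableSubseq_tendsto_pi {ι : Type*} [Fintype ι] {G : ℕ → Ω → ι → ℝ}
    (hG : ∀ n, Measurable (G n)) (hb : ∀ ω, ∃ C, ∀ n, ‖G n ω‖ ≤ C) :
    ∃ σ, IsMeasurableSubseq m σ ∧ ∀ ω, ∃ L, Tendsto (fun k => G (σ ω k) ω) atTop (𝓝 L) := by
  classical
  suffices ∀ s : Finset ι, ∃ σ, IsMeasurableSubseq m σ ∧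
      ∀ ω, ∀ i ∈ s, ∃ L, Tendsto (fun k => G (σ ω k) ω i) atTop (𝓝 L) by
    obtain ⟨σ, hσ, hlim⟩ := this Finset.univ
    refine ⟨σ, hσ, fun ω => ?_⟩
    choose L hL using fun i => hlim ω i (Finset.mem_univ i)
    exact ⟨L, tendsto_pi_nhds.2 hL⟩
  intro s
  induction s using Finset.induction_on with
  | empty => exact ⟨fun _ k => k, ⟨fun _ => strictMono_id, fun _ => measurable_const⟩, by simp⟩
  | insert i s _ ih =>
    obtain ⟨σ, hσ, hlim⟩ := ih
    obtain ⟨τ, hτ, hτ_lim⟩ := exists_isMeasurableSubseq_tendsto_limsup (m := m)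
      (x := fun n ω => G (σ ω n) ω i)
      (fun n => (measurable_pi_apply i).comp (measurable_apply_index hG (hσ.2 n)))
      (fun ω => (hb ω).imp fun C hC n => (norm_le_pi_norm (G (σ ω n) ω) i).trans (hC _))
    refine ⟨_, hσ.comp hτ, fun ω j hj => ?_⟩
    rcases Finset.mem_insert.1 hj with rfl | hj
    · exact ⟨_, hτ_lim ω⟩
    · obtain ⟨L, hL⟩ := hlim ω j hj
      exact ⟨L, hL.comp (hτ.1 ω).tendsto_atTop⟩

lemma exists_isMeasurableSubseq_tendsto {E : Type*} [NormedAddCommGroup E] [NormedSpace ℝ E]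
    [FiniteDimensional ℝ E] [MeasurableSpace E] [BorelSpace E] {G : ℕ → Ω → E}
    (hG : ∀ n, Measurable (G n)) (hb : ∀ ω, ∃ C, ∀ n, ‖G n ω‖ ≤ C) :
    ∃ σ, IsMeasurableSubseq m σ ∧ ∀ ω, ∃ L, Tendsto (fun k => G (σ ω k) ω) atTop (𝓝 L) := by
  let e := (Module.finBasis ℝ E).equivFunL
  obtain ⟨σ, hσ, hlim⟩ := exists_isMeasurableSubseq_tendsto_pi (m := m)
    (G := fun n ω => e (G n ω)) (fun n => e.continuous.measurable.comp (hG n))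
    (fun ω => (hb ω).elim fun C hC => ⟨_, fun n => e.toContinuousLinearMap.le_opNorm_of_le (hC n)⟩)
  refine ⟨σ, hσ, fun ω => ?_⟩
  obtain ⟨L, hL⟩ := hlim ω
  exact ⟨e.symm L, by simpa [Function.comp_def] using (e.symm.continuous.tendsto L).comp hL⟩

end MeasurableSubseq

section AsymptoticCone

variable {V : Type*} [AddCommGroup V] [Module ℝ V] [TopologicalSpace V] [IsTopologicalAddGroup V]
  [ContinuousSMul ℝ V] {s : Set V} {v : V}

lemma ContinuousLinearMap.apply_nonneg_of_mem_asymptoticCone (ℓ : V →L[ℝ] ℝ)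
    (hv : v ∈ asymptoticCone ℝ s) {c : ℝ} (hs : ∀ y ∈ s, c ≤ ℓ y) : 0 ≤ ℓ v := by
  obtain ⟨p, hp⟩ := asymptoticCone_nonempty.1 ⟨v, hv⟩
  -- the closed half-space `{c ≤ ℓ}` contains `s`, hence every ray `p + t • v`, `t ≥ 0`
  have hray : ∀ t : ℝ, 0 ≤ t → c ≤ t * ℓ v + ℓ p := fun t ht => by
    simpa using (convex_halfSpace_ge ℓ.isLinear c).smul_vadd_mem_of_isClosed_of_mem_asymptoticCone
      (isClosed_le continuous_const ℓ.continuous) ht (asymptoticCone_mono hs hv) (hs p hp)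
  by_contra! hneg
  have := hray ((ℓ p - c + 1) / -ℓ v) (div_nonneg (by linarith [hs p hp]) (by linarith))
  rw [div_mul_eq_mul_div, div_neg, mul_div_cancel_right₀ _ hneg.ne] at this
  linarith

lemma mem_asymptoticCone_of_tendsto_smul {E : Type*} [NormedAddCommGroup E] [NormedSpace ℝ E]
    {s : Set E} {y : ℕ → E} {u : E} (hy : ∀ k, y k ∈ s)
    (hnorm : Tendsto (fun k => ‖y k‖) atTop atTop)
    (hlim : Tendsto (fun k => ‖y k‖⁻¹ • y k) atTop (𝓝 u)) : u ∈ asymptoticCone ℝ s :=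
  mem_asymptoticCone_iff.2 <| (hnorm.atTop_smul_nhds_tendsto_asymptoticNhds hlim).frequently <|
    Eventually.frequently <| (hnorm.eventually_gt_atTop 0).mono fun k hk => by
      simpa only [smul_inv_smul₀ hk.ne'] using hy k

lemma Submodule.mem_of_mem_asymptoticCone {K : Submodule ℝ V} (hK : IsClosed (K : Set V))
    (hs : s ⊆ K) (hv : v ∈ asymptoticCone ℝ s) : v ∈ K := by
  simpa [asymptoticCone_submodule, hK.closure_eq] using asymptoticCone_mono hs hv

end AsymptoticCone

section InnerAsymptoticCone

variable {ι E : Type*} [NormedAddCommGroup E] [InnerProductSpace ℝ E] {x : ι → E} {u w : E}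

lemma inner_nonneg_of_mem_asymptoticCone (hu : u ∈ asymptoticCone ℝ (range x)) {c : ℝ}
    (hx : ∀ i, c ≤ ⟪x i, w⟫) : 0 ≤ ⟪u, w⟫ := by
  simpa only [innerSL_apply_apply, real_inner_comm] using
    (innerSL ℝ w).apply_nonneg_of_mem_asymptoticCone hu (forall_mem_range.2 fun i => by
      simpa only [innerSL_apply_apply, real_inner_comm] using hx i)

lemma inner_eq_zero_of_mem_asymptoticCone (hu : u ∈ asymptoticCone ℝ (range x)) {C : ℝ}
    (hx : ∀ i, |⟪x i, w⟫| ≤ C) : ⟪u, w⟫ = 0 := by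
  refine le_antisymm ?_ (inner_nonneg_of_mem_asymptoticCone hu fun i => neg_le_of_abs_le (hx i))
  simpa [inner_neg_right] using inner_nonneg_of_mem_asymptoticCone (w := -w) hu fun i => by
    rw [inner_neg_right]
    exact neg_le_neg (le_of_abs_le (hx i))

end InnerAsymptoticCone

lemma exists_measurable_mem_asymptoticCone {Ω E : Type*} {m : MeasurableSpace Ω}
    [NormedAddCommGroup E] [NormedSpace ℝ E] [FiniteDimensional ℝ E] [MeasurableSpace E]
    [BorelSpace E] {H : ℕ → Ω → E} (hH : ∀ n, Measurable (H n)) :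
    ∃ h : Ω → E, Measurable h ∧ (∀ ω, h ω ∈ asymptoticCone ℝ (range fun n => H n ω)) ∧
      ∀ ω, h ω = 0 → ∃ C, ∀ n, ‖H n ω‖ ≤ C := by
  set A : Set Ω := {ω | ¬BddAbove (range fun n => ‖H n ω‖)}
  have hA : MeasurableSet A := (measurableSet_bddAbove_range fun n => (hH n).norm).compl
  obtain ⟨τ, hτ, hτ_large⟩ := exists_isMeasurableSubseq_forall (m := m)
    (p := fun k ω n => ω ∈ A → (k : ℝ) + 1 ≤ ‖H n ω‖)
    (fun k ω => by
      by_cases hωA : ω ∈ A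
      · exact (frequently_le_of_not_bddAbove hωA _).mono fun n hn _ => hn
      · exact .of_forall fun n h => absurd h hωA)
    (fun k n => by
      simp only [imp_iff_not_or, ofPred_or]
      exact hA.compl.union (measurableSet_le measurable_const (hH n).norm))
  let G : ℕ → Ω → E := fun k ω => ‖H (τ ω k) ω‖⁻¹ • H (τ ω k) ω
  have hG_meas : ∀ k, Measurable (G k) := fun k =>
    measurable_apply_index (fun n => (hH n).norm.inv.smul (hH n)) (hτ.2 k)
  have hG_norm : ∀ k ω, ‖G k ω‖ ≤ 1 := fun k ω => by
    simpa only [G, norm_smul, norm_inv, norm_norm] using inv_mul_le_one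
  obtain ⟨σ, hσ, hσ_lim⟩ := exists_isMeasurableSubseq_tendsto (m := m) hG_meas
    fun ω => ⟨1, fun k => hG_norm k ω⟩
  choose h₀ hh₀ using hσ_lim
  have hh₀_meas : Measurable h₀ := measurable_of_tendsto_metrizable
    (fun k => measurable_apply_index hG_meas (hσ.2 k)) (tendsto_pi_nhds.2 hh₀)
  refine ⟨A.indicator h₀, hh₀_meas.indicator hA, fun ω => ?_, fun ω hω => ?_⟩
  · by_cases hωA : ω ∈ A
    · rw [indicator_of_mem hωA]
      refine mem_asymptoticCone_of_tendsto_smul (fun k => mem_range_self _) ?_ (hh₀ ω)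
      exact tendsto_atTop_mono (fun k => hτ_large ω (σ ω k) hωA) <|
        tendsto_atTop_add_const_right _ 1 <|
          tendsto_natCast_atTop_atTop.comp (hσ.1 ω).tendsto_atTop
    · rw [indicator_of_notMem hωA]
      exact zero_mem_asymptoticCone.2 (range_nonempty _)
  · by_contra hunb
    have hωA : ω ∈ A := fun ⟨C, hC⟩ => hunb ⟨C, fun n => hC ⟨n, rfl⟩⟩
    have hunit : ∀ k, ‖G (σ ω k) ω‖ = 1 := fun k => norm_smul_inv_norm <| norm_pos_iff.1 <|
      lt_of_lt_of_le (by positivity) (hτ_large ω (σ ω k) hωA)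
    have h₀_unit : ‖h₀ ω‖ = 1 :=
      tendsto_nhds_unique (hh₀ ω).norm (tendsto_const_nhds.congr fun k => (hunit k).symm)
    rw [indicator_of_mem hωA] at hω
    rw [hω, norm_zero] at h₀_unit
    exact zero_ne_one h₀_unit

lemma ae_mem_of_subset_closure {Ω X Y : Type*} [MeasurableSpace Ω] {P : Measure Ω}
    [TopologicalSpace X] [FrechetUrysohnSpace X] [TopologicalSpace Y] {Γ Θ : Set X}
    (hΘΓ : Θ ⊆ closure Γ) {f : X → Ω → Y}
    (hf : ∀ (θs : ℕ → X) (θ : X), (∀ n, θs n ∈ Γ) → θ ∈ Θ → Tendsto θs atTop (𝓝 θ) →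
      ∃ φ : ℕ → ℕ, ∀ᵐ ω ∂P, Tendsto (fun k => f (θs (φ k)) ω) atTop (𝓝 (f θ ω)))
    {F : Set Y} (hF : IsClosed F) (hΓ : ∀ θ ∈ Γ, ∀ᵐ ω ∂P, f θ ω ∈ F) :
    ∀ θ ∈ Θ, ∀ᵐ ω ∂P, f θ ω ∈ F := by
  intro θ hθ
  obtain ⟨θs, hθs, hlim⟩ := mem_closure_iff_seq_limit.1 (hΘΓ hθ)
  obtain ⟨φ, hφ⟩ := hf θs θ hθs hθ hlim
  filter_upwards [hφ, ae_all_iff.2 fun k => hΓ _ (hθs (φ k))] with ω hω hmem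
  exact hF.mem_of_tendsto hω (Eventually.of_forall hmem)

lemma ae_inner_increment_mem_of_subset_closure {Ω X E : Type*} [MeasurableSpace Ω]
    {P : Measure Ω} [MetricSpace X] [NormedAddCommGroup E] [InnerProductSpace ℝ E] {T t : ℕ}
    {Γ Θ : Set X} {S : X → ℕ → Ω → E}
    (hS_cont : ∀ (θs : ℕ → X) (θ : X), (∀ n, θs n ∈ Θ) → θ ∈ Θ →
      Tendsto θs atTop (𝓝 θ) → ∃ φ : ℕ → ℕ, StrictMono φ ∧
        ∀ t ≤ T, ∀ᵐ ω ∂P, Tendsto (fun k => S (θs (φ k)) t ω) atTop (𝓝 (S θ t ω)))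
    (htT : t ≤ T) (hΓΘ : Γ ⊆ Θ) (hΘΓ : Θ ⊆ closure Γ) (h : Ω → E) {F : Set ℝ} (hF : IsClosed F)
    (hΓ : ∀ θ ∈ Γ, ∀ᵐ ω ∂P, ⟪h ω, S θ t ω - S θ (t - 1) ω⟫ ∈ F) :
    ∀ θ ∈ Θ, ∀ᵐ ω ∂P, ⟪h ω, S θ t ω - S θ (t - 1) ω⟫ ∈ F := by
  refine ae_mem_of_subset_closure hΘΓ (fun θs θ hθs hθ hlim => ?_) hF hΓ
  obtain ⟨φ, -, hφ⟩ := hS_cont θs θ (fun n => hΓΘ (hθs n)) hθ hlim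
  refine ⟨φ, ?_⟩
  filter_upwards [hφ t htT, hφ (t - 1) (by omega)] with ω h₁ h₂
  exact tendsto_const_nhds.inner (h₁.sub h₂)

lemma gain_single {Ω X : Type*} {d T t : ℕ} (ht1 : 1 ≤ t) (htT : t ≤ T)
    (S : X → ℕ → Ω → EuclideanSpace ℝ (Fin d)) (h : Ω → EuclideanSpace ℝ (Fin d)) (θ : X)
    (ω : Ω) : gain d T S (Pi.single t h) θ ω = ⟪h ω, S θ t ω - S θ (t - 1) ω⟫ := by
  rw [gain, Finset.sum_eq_single_of_mem t (Finset.mem_Icc.2 ⟨ht1, htT⟩)]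
  · simp
  · intro s _ hst
    simp [hst]

lemma isStrategy_single {Ω : Type*} {𝓕 : ℕ → MeasurableSpace Ω} {d T t : ℕ}
    {h : Ω → EuclideanSpace ℝ (Fin d)} (hh : StronglyMeasurable[𝓕 (t - 1)] h) :
    IsStrategy 𝓕 d T (Pi.single t h) := by
  intro s _ _
  rcases eq_or_ne s t with rfl | hst
  · simpa using hh
  · rw [Pi.single_eq_of_ne hst]
    exact stronglyMeasurable_zero

lemma NRA.ae_inner_eq_zero {Ω X : Type*} [MeasurableSpace Ω] {P : Measure Ω}
    {𝓕 : ℕ → MeasurableSpace Ω} {d T : ℕ} {Θ : Set X} {S : X → ℕ → Ω → EuclideanSpace ℝ (Fin d)}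
    (hNRA : NRA P 𝓕 d T Θ S) {t : ℕ} (ht1 : 1 ≤ t) (htT : t ≤ T)
    {h : Ω → EuclideanSpace ℝ (Fin d)} (hh : StronglyMeasurable[𝓕 (t - 1)] h)
    (hnonneg : ∀ θ ∈ Θ, ∀ᵐ ω ∂P, 0 ≤ ⟪h ω, S θ t ω - S θ (t - 1) ω⟫) :
    ∀ θ ∈ Θ, ∀ᵐ ω ∂P, ⟪h ω, S θ t ω - S θ (t - 1) ω⟫ = 0 := by
  simp_rw [← gain_single ht1 htT] at hnonneg ⊢
  exact hNRA _ (isStrategy_single hh) hnonneg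

theorem canonical_bounded_iff_general
    {Ω : Type*} [mΩ : MeasurableSpace Ω] (P : Measure Ω)
    {X : Type*} [MetricSpace X]
    (d T : ℕ)
    (𝓕 : ℕ → MeasurableSpace Ω)
    (Θ : Set X)
    (S : X → ℕ → Ω → EuclideanSpace ℝ (Fin d))
    (hS_cont : ∀ (θs : ℕ → X) (θ : X), (∀ n, θs n ∈ Θ) → θ ∈ Θ →
      Tendsto θs atTop (𝓝 θ) → ∃ φ : ℕ → ℕ, StrictMono φ ∧
        ∀ t ≤ T, ∀ᵐ ω ∂P, Tendsto (fun k => S (θs (φ k)) t ω) atTop (𝓝 (S θ t ω)))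
    (t : ℕ) (ht1 : 1 ≤ t) (htT : t ≤ T)
    (Γ : Set X) (hΓ_sub : Γ ⊆ Θ) (hΓ_dense : Θ ⊆ closure Γ)
    (Proj : Ω → EuclideanSpace ℝ (Fin d) →L[ℝ] EuclideanSpace ℝ (Fin d))
    (hProj_char : ∀ h : Ω → EuclideanSpace ℝ (Fin d), StronglyMeasurable[𝓕 (t - 1)] h →
      ((∀ θ ∈ Θ, ∀ᵐ ω ∂P, ⟪h ω, S θ t ω - S θ (t - 1) ω⟫ = 0) ↔
        ∀ᵐ ω ∂P, Proj ω (h ω) = h ω))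
    (H : ℕ → Ω → EuclideanSpace ℝ (Fin d))
    (hH_meas : ∀ n, StronglyMeasurable[𝓕 (t - 1)] (H n))
    (hH_canon : ∀ n, ∀ᵐ ω ∂P, H n ω - Proj ω (H n ω) = H n ω) :
    ((∀ᵐ ω ∂P, ∃ C : ℝ, ∀ n, ‖H n ω‖ ≤ C) ↔
      ∀ θ ∈ Γ, ∀ᵐ ω ∂P, ∃ C : ℝ, ∀ n, |⟪H n ω, S θ t ω - S θ (t - 1) ω⟫| ≤ C) ∧
    (NRA P 𝓕 d T Θ S →
      ((∀ᵐ ω ∂P, ∃ C : ℝ, ∀ n, ‖H n ω‖ ≤ C) ↔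
        ∀ θ ∈ Γ, ∀ᵐ ω ∂P, ∃ C : ℝ, ∀ n,
          max (-⟪H n ω, S θ t ω - S θ (t - 1) ω⟫) 0 ≤ C)) := by
  obtain ⟨h, hh_meas, hh_cone, hh_bdd⟩ :=
    exists_measurable_mem_asymptoticCone fun n => (hH_meas n).measurable
  have bdd_of_orthogonal : (∀ θ ∈ Θ, ∀ᵐ ω ∂P, ⟪h ω, S θ t ω - S θ (t - 1) ω⟫ = 0) →
      ∀ᵐ ω ∂P, ∃ C : ℝ, ∀ n, ‖H n ω‖ ≤ C := fun horth => by
    filter_upwards [(hProj_char h hh_meas.stronglyMeasurable).1 horth, ae_all_iff.2 hH_canon]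
      with ω hfix hcanon
    refine hh_bdd ω (hfix ▸ Submodule.mem_of_mem_asymptoticCone (Proj ω).isClosed_ker ?_
      (hh_cone ω))
    rintro _ ⟨n, rfl⟩
    exact sub_eq_self.1 (hcanon n)
  have inner_bdd : (∀ᵐ ω ∂P, ∃ C : ℝ, ∀ n, ‖H n ω‖ ≤ C) →
      ∀ θ ∈ Γ, ∀ᵐ ω ∂P, ∃ C : ℝ, ∀ n, |⟪H n ω, S θ t ω - S θ (t - 1) ω⟫| ≤ C :=
    fun hb θ _ => hb.mono fun ω ⟨C, hC⟩ => ⟨C * ‖S θ t ω - S θ (t - 1) ω‖, fun n =>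
      (abs_real_inner_le_norm _ _).trans (by gcongr; exact hC n)⟩
  refine ⟨⟨inner_bdd, fun hb => bdd_of_orthogonal ?_⟩,
    fun hNRA => ⟨fun hb θ hθ => ?_, fun hb => bdd_of_orthogonal ?_⟩⟩
  · refine ae_inner_increment_mem_of_subset_closure hS_cont htT hΓ_sub hΓ_dense h
      isClosed_singleton fun θ hθ => ?_
    filter_upwards [hb θ hθ] with ω ⟨C, hC⟩
      using inner_eq_zero_of_mem_asymptoticCone (hh_cone ω) hC
  · filter_upwards [inner_bdd hb θ hθ] with ω ⟨C, hC⟩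
      using ⟨C, fun n => max_le ((neg_le_abs _).trans (hC n)) ((abs_nonneg _).trans (hC n))⟩
  · refine hNRA.ae_inner_eq_zero ht1 htT hh_meas.stronglyMeasurable <|
      ae_inner_increment_mem_of_subset_closure hS_cont htT hΓ_sub hΓ_dense h
        isClosed_Ici fun θ hθ => ?_
    filter_upwards [hb θ hθ] with ω ⟨C, hC⟩
      using inner_nonneg_of_mem_asymptoticCone (hh_cone ω) fun n =>
        neg_le.1 ((le_max_left _ _).trans (hC n))

/-- **Boundedness of canonical-form sequences (Lemma 3.2 (i), (i')).**
Fix `1 ≤ t ≤ T` and a dense subset `Γ` of `Θ`, and let `(H_n)` be a sequence of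
`F_{t-1}`-measurable random vectors in canonical form.  Then `(H_n)` is a.s. bounded iff
for every `θ ∈ Γ` the sequence `(⟨H_n, ΔS^θ_t⟩)` is a.s. bounded; and, if moreover NRA
holds, iff for every `θ ∈ Γ` the sequence of negative parts `((⟨H_n, ΔS^θ_t⟩)⁻)` is
a.s. bounded. -/
theorem canonical_bounded_iff
    {Ω : Type*} [mΩ : MeasurableSpace Ω] (P : Measure Ω) [IsProbabilityMeasure P]
    {X : Type*} [MetricSpace X] [TopologicalSpace.SeparableSpace X]
    (d T : ℕ) (hd : 1 ≤ d) (hT : 1 ≤ T)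
    (𝓕 : ℕ → MeasurableSpace Ω) (h𝓕_mono : Monotone 𝓕) (h𝓕_le : ∀ t, 𝓕 t ≤ mΩ)
    (h𝓕_null : ∀ N : Set Ω, P N = 0 → MeasurableSet[𝓕 0] N)
    (Θ : Set X) (hΘ_closed : IsClosed Θ) (hΘ_ne : Θ.Nonempty)
    (S : X → ℕ → Ω → EuclideanSpace ℝ (Fin d))
    (hS_adapted : ∀ θ ∈ Θ, ∀ t ≤ T, StronglyMeasurable[𝓕 t] (S θ t))
    (hS_cont : ∀ (θs : ℕ → X) (θ : X), (∀ n, θs n ∈ Θ) → θ ∈ Θ →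
      Tendsto θs atTop (𝓝 θ) → ∃ φ : ℕ → ℕ, StrictMono φ ∧
        ∀ t ≤ T, ∀ᵐ ω ∂P, Tendsto (fun k => S (θs (φ k)) t ω) atTop (𝓝 (S θ t ω)))
    (t : ℕ) (ht1 : 1 ≤ t) (htT : t ≤ T)
    (Γ : Set X) (hΓ_sub : Γ ⊆ Θ) (hΓ_dense : Θ ⊆ closure Γ)
    (Proj : Ω → EuclideanSpace ℝ (Fin d) →L[ℝ] EuclideanSpace ℝ (Fin d))
    (hProj_meas : ∀ x, Measurable[𝓕 (t - 1)] fun ω => Proj ω x)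
    (hProj_idem : ∀ ω, (Proj ω).comp (Proj ω) = Proj ω)
    (hProj_selfadj : ∀ ω x y, ⟪Proj ω x, y⟫ = ⟪x, Proj ω y⟫)
    (hProj_char : ∀ h : Ω → EuclideanSpace ℝ (Fin d), StronglyMeasurable[𝓕 (t - 1)] h →
      ((∀ θ ∈ Θ, ∀ᵐ ω ∂P, ⟪h ω, S θ t ω - S θ (t - 1) ω⟫ = 0) ↔
        ∀ᵐ ω ∂P, Proj ω (h ω) = h ω))
    (H : ℕ → Ω → EuclideanSpace ℝ (Fin d))
    (hH_meas : ∀ n, StronglyMeasurable[𝓕 (t - 1)] (H n))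
    (hH_canon : ∀ n, ∀ᵐ ω ∂P, H n ω - Proj ω (H n ω) = H n ω) :
    ((∀ᵐ ω ∂P, ∃ C : ℝ, ∀ n, ‖H n ω‖ ≤ C) ↔
      ∀ θ ∈ Γ, ∀ᵐ ω ∂P, ∃ C : ℝ, ∀ n, |⟪H n ω, S θ t ω - S θ (t - 1) ω⟫| ≤ C) ∧
    (NRA P 𝓕 d T Θ S →
      ((∀ᵐ ω ∂P, ∃ C : ℝ, ∀ n, ‖H n ω‖ ≤ C) ↔
        ∀ θ ∈ Γ, ∀ᵐ ω ∂P, ∃ C : ℝ, ∀ n,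
          max (-⟪H n ω, S θ t ω - S θ (t - 1) ω⟫) 0 ≤ C)) :=
  canonical_bounded_iff_general (mΩ := mΩ) P d T 𝓕 Θ S hS_cont t ht1 htT Γ hΓ_sub hΓ_dense Proj
    hProj_char H hH_meas hH_canon
end

section
/- Let 0 < σ₁ < σ₂ and define f(1) := 1 + σ₂ and f(−1) := 1 − σ₁. Then: (a) the minimal x ∈ ℝ for which there exists H ∈ ℝ with x + H σ_i ω ≥ f(ω) for all ω ∈ {−1, 1} and i = 1, 2 equals 1 + σ₂ − σ₁, and it is attained with H = 1; (b) for each single model i ∈ {1, 2}, the minimal x ∈ ℝ for which there exists H ∈ ℝ with x + H σ_i ω ≥ f(ω) for all ω ∈ {−1, 1} equals 1 + (σ₂ − σ₁)/2, attained with H = (σ₁ + σ₂)/(2σ_i); (c) there is no H ∈ ℝ satisfying 1 + (σ₂ − σ₁)/2 + H σ_i ω ≥ f(ω) for all ω ∈ {−1, 1} and i = 1, 2; in particular the worst-case superhedging price 1 + (σ₂ − σ₁)/2 is strictly smaller than the robust superhedging price 1 + σ₂ − σ₁. -/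
/-!
In a single model with volatility `σ`, adding the constraints `a ≤ x + Hσ` and `b ≤ x - Hσ`
eliminates `H` and gives `a + b ≤ 2x`, so the midpoint `(a + b)/2` is the superhedging price.
Across two models with volatilities `s ≤ t`, the constraint `a ≤ x + Hs` of the calm model and
`b ≤ x - Ht` of the volatile one, weighted by `t` and `s`, again eliminate `H` and give
`(s + t)x ≥ at + bs`; for `a = 1 + σ₂`, `b = 1 - σ₁` this is `x ≥ 1 + σ₂ - σ₁`, attained by `H = 1`.
This robust price exceeds the midpoint `1 + (σ₂ - σ₁)/2`, so no strategy works from the latter.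
-/

-- Prices `x` that superhedge the claim paying `a` on the up-move and `b` on the down-move.
def superhedgingPrices (a b σ : ℝ) : Set ℝ :=
  {x | ∃ H : ℝ, a ≤ x + H * σ ∧ b ≤ x - H * σ}

def robustSuperhedgingPrices (a b s t : ℝ) : Set ℝ :=
  {x | ∃ H : ℝ, a ≤ x + H * s ∧ b ≤ x - H * s ∧ a ≤ x + H * t ∧ b ≤ x - H * t}

section

variable {a b σ s t : ℝ}

theorem superhedges_midpoint (hσ : σ ≠ 0) :
    a ≤ (a + b) / 2 + (a - b) / (2 * σ) * σ ∧ b ≤ (a + b) / 2 - (a - b) / (2 * σ) * σ := by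
  have hhedge : (a - b) / (2 * σ) * σ = (a - b) / 2 := by field_simp
  constructor <;> linarith

theorem isLeast_superhedgingPrices (hσ : σ ≠ 0) :
    IsLeast (superhedgingPrices a b σ) ((a + b) / 2) :=
  ⟨⟨_, superhedges_midpoint hσ⟩, fun _ ⟨_, hup, hdown⟩ => by linarith⟩

theorem isLeast_robustSuperhedgingPrices (hs : 0 < s) (hst : s ≤ t) (hba : b ≤ a) :
    IsLeast (robustSuperhedgingPrices a b s t) ((a * t + b * s) / (s + t)) := by
  have hsum : 0 < s + t := by linarith
  refine ⟨⟨(a - b) / (s + t), ?_⟩, ?_⟩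
  · have hH : 0 ≤ (a - b) / (s + t) := div_nonneg (by linarith) hsum.le
    have hup : (a * t + b * s) / (s + t) + (a - b) / (s + t) * s = a := by
      field_simp; ring
    have hdown : (a * t + b * s) / (s + t) - (a - b) / (s + t) * t = b := by
      field_simp; ring
    refine ⟨hup.ge, ?_, ?_, hdown.ge⟩ <;> nlinarith [mul_le_mul_of_nonneg_left hst hH]
  · rintro x ⟨H, hup, -, -, hdown⟩
    rw [div_le_iff₀ hsum]
    nlinarith [mul_le_mul_of_nonneg_left hup (hs.le.trans hst),
      mul_le_mul_of_nonneg_left hdown hs.le]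

end

/-- **Worst-case superhedging prices are not enough.**
In the one-period toy model with zero drifts and volatilities `0 < σ₁ < σ₂`, for the claim
`f(1) = 1 + σ₂`, `f(-1) = 1 - σ₁`:
(a) the robust superhedging price over both models is `1 + σ₂ - σ₁`, attained by `H = 1`;
(b) for each single model `i` the superhedging price is `1 + (σ₂ - σ₁)/2`, attained by
`H = (σ₁ + σ₂)/(2σᵢ)`;
(c) no strategy superhedges the claim in both models starting from the worst-case price
`1 + (σ₂ - σ₁)/2`, which is strictly smaller than the robust price `1 + σ₂ - σ₁`. -/
theorem toy_model_worst_case_price_not_enough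
    (σ₁ σ₂ : ℝ) (h0 : 0 < σ₁) (h12 : σ₁ < σ₂) :
    (IsLeast {x : ℝ | ∃ H : ℝ,
        1 + σ₂ ≤ x + H * σ₁ ∧ 1 - σ₁ ≤ x - H * σ₁ ∧
        1 + σ₂ ≤ x + H * σ₂ ∧ 1 - σ₁ ≤ x - H * σ₂} (1 + σ₂ - σ₁) ∧
      (1 + σ₂ ≤ (1 + σ₂ - σ₁) + 1 * σ₁ ∧ 1 - σ₁ ≤ (1 + σ₂ - σ₁) - 1 * σ₁ ∧
       1 + σ₂ ≤ (1 + σ₂ - σ₁) + 1 * σ₂ ∧ 1 - σ₁ ≤ (1 + σ₂ - σ₁) - 1 * σ₂)) ∧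
    (∀ σ : ℝ, σ = σ₁ ∨ σ = σ₂ →
      IsLeast {x : ℝ | ∃ H : ℝ, 1 + σ₂ ≤ x + H * σ ∧ 1 - σ₁ ≤ x - H * σ}
        (1 + (σ₂ - σ₁) / 2) ∧
      (1 + σ₂ ≤ (1 + (σ₂ - σ₁) / 2) + (σ₁ + σ₂) / (2 * σ) * σ ∧
       1 - σ₁ ≤ (1 + (σ₂ - σ₁) / 2) - (σ₁ + σ₂) / (2 * σ) * σ)) ∧
    (¬ ∃ H : ℝ,
        1 + σ₂ ≤ (1 + (σ₂ - σ₁) / 2) + H * σ₁ ∧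
        1 - σ₁ ≤ (1 + (σ₂ - σ₁) / 2) - H * σ₁ ∧
        1 + σ₂ ≤ (1 + (σ₂ - σ₁) / 2) + H * σ₂ ∧
        1 - σ₁ ≤ (1 + (σ₂ - σ₁) / 2) - H * σ₂) ∧
    1 + (σ₂ - σ₁) / 2 < 1 + σ₂ - σ₁ := by
  have hσ₂ : 0 < σ₂ := h0.trans h12
  have hmidpoint : ((1 + σ₂) + (1 - σ₁)) / 2 = 1 + (σ₂ - σ₁) / 2 := by ring
  have hspread : (1 + σ₂) - (1 - σ₁) = σ₁ + σ₂ := by ring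
  have hrobust : IsLeast (robustSuperhedgingPrices (1 + σ₂) (1 - σ₁) σ₁ σ₂) (1 + σ₂ - σ₁) := by
    convert isLeast_robustSuperhedgingPrices h0 h12.le (by linarith : 1 - σ₁ ≤ 1 + σ₂) using 1
    field_simp
    ring
  have hgap : 1 + (σ₂ - σ₁) / 2 < 1 + σ₂ - σ₁ := by linarith
  refine ⟨⟨hrobust, by linarith, by linarith, by linarith, by linarith⟩, fun σ hσ => ?_,
    fun hworst => (hrobust.2 hworst).not_gt hgap, hgap⟩
  have hσ0 : σ ≠ 0 := by rcases hσ with rfl | rfl <;> positivity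
  rw [← hmidpoint, ← hspread]
  exact ⟨isLeast_superhedgingPrices hσ0, superhedges_midpoint hσ0⟩
end
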